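/- The noncommutative Motzkin polynomial M_nc(x,y) = x y⁴ x + y x⁴ y − 3 x y² x + 1 is trace positive: for all real symmetric matrices A, B of the same size r, Tr(A B⁴ A + B A⁴ B − 3 A B² A + I_r) ≥ 0. -/

import Mathlib

open scoped Matrix

/-- `ℝ⟨x₁,…,xₙ⟩`: noncommutative polynomials with real coefficients in `n`
noncommuting letters, realized as the monoid algebra of the free monoid on `Fin n`. -/
abbrev NCPoly (n : ℕ) : Type := MonoidAlgebra ℝ (FreeMonoid (Fin n))

/-- The canonical involution `f ↦ f⋆` on `ℝ⟨x⟩`: it fixes `ℝ` and each letter `xᵢ`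
and reverses words. -/
noncomputable def ncStar {n : ℕ} (f : NCPoly n) : NCPoly n :=
  MonoidAlgebra.mapDomain FreeMonoid.reverse f

/-- `degLE f d`: the nc polynomial `f` has degree at most `d`. -/
def degLE {n : ℕ} (f : NCPoly n) (d : ℕ) : Prop :=
  ∀ w ∈ f.coeff.support, FreeMonoid.length w ≤ d

/-- The `i`-th letter `xᵢ` as an nc polynomial. -/
noncomputable def ncX {n : ℕ} (i : Fin n) : NCPoly n :=
  MonoidAlgebra.of ℝ (FreeMonoid (Fin n)) (FreeMonoid.of i)

/-- A word `w` viewed as an nc polynomial (the monomial `w` with coefficient `1`). -/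
noncomputable def ncWord {n : ℕ} (w : FreeMonoid (Fin n)) : NCPoly n :=
  MonoidAlgebra.of ℝ (FreeMonoid (Fin n)) w

/-- Evaluation of an nc polynomial at a tuple `A = (A₁,…,Aₙ)` of square matrices:
the algebra homomorphism `ℝ⟨x⟩ → ℝ^{r×r}` sending `xᵢ` to `Aᵢ`. -/
noncomputable def ncEval {n r : ℕ} (A : Fin n → Matrix (Fin r) (Fin r) ℝ) :
    NCPoly n →ₐ[ℝ] Matrix (Fin r) (Fin r) ℝ :=
  MonoidAlgebra.lift ℝ _ (FreeMonoid (Fin n)) (FreeMonoid.lift A)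

/-- The cone `Σ` of sums of Hermitian squares `Σᵢ gᵢ⋆ gᵢ`. -/
def SOHS (n : ℕ) : Set (NCPoly n) :=
  { f | ∃ (k : ℕ) (g : Fin k → NCPoly n), f = ∑ i, ncStar (g i) * g i }

/-- The truncated cone `Σ_{2d}`: sums of Hermitian squares `Σᵢ gᵢ⋆ gᵢ` with `deg gᵢ ≤ d`. -/
def SOHSdeg (n d : ℕ) : Set (NCPoly n) :=
  { f | ∃ (k : ℕ) (g : Fin k → NCPoly n), (∀ i, degLE (g i) d) ∧ f = ∑ i, ncStar (g i) * g i }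

/-- `f ∼cyc g`: `f - g` is a finite sum of commutators. -/
def cycEq {n : ℕ} (f g : NCPoly n) : Prop :=
  ∃ (k : ℕ) (p q : Fin k → NCPoly n), f - g = ∑ i, (p i * q i - q i * p i)

/-- `Θ`: nc polynomials cyclically equivalent to a sum of Hermitian squares. -/
def Theta (n : ℕ) : Set (NCPoly n) :=
  { f | ∃ σ ∈ SOHS n, cycEq f σ }

/-- The quadratic module `Q(𝔤)` generated by a finite set `G` of nc polynomials:
all finite sums `Σᵢ pᵢ⋆ gᵢ pᵢ` with `gᵢ ∈ G ∪ {1}`. -/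
def QModule {n : ℕ} (G : Finset (NCPoly n)) : Set (NCPoly n) :=
  { f | ∃ (k : ℕ) (g p : Fin k → NCPoly n),
      (∀ i, g i ∈ (G : Set (NCPoly n)) ∪ {1}) ∧ f = ∑ i, ncStar (p i) * g i * p i }

/-- Words of degree (length) at most `d` in `n` letters. -/
def WordLE (n d : ℕ) : Type := { w : FreeMonoid (Fin n) // FreeMonoid.length w ≤ d }

noncomputable instance (n d : ℕ) : Fintype (WordLE n d) := by
  have h : {l : List (Fin n) | l.length ≤ d}.Finite := List.finite_length_le (Fin n) d
  have : Finite (WordLE n d) := h.to_subtype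
  exact Fintype.ofFinite _

instance (n d : ℕ) : DecidableEq (WordLE n d) := by
  unfold WordLE FreeMonoid; exact inferInstance

/-!
Diagonalize `A = U D Uᵀ` and `B = V E Vᵀ` with `U`, `V` orthogonal, and put `W = Uᵀ V`. Then
`Tr (A ^ m * B ^ k) = ∑ i j, aᵢ ^ m * bⱼ ^ k * Wᵢⱼ ^ 2`, and by cyclicity of the trace the trace of
the nc Motzkin polynomial becomes `∑ i j, M(aᵢ, bⱼ) * Wᵢⱼ ^ 2`, where `M` is the commutative Motzkin
polynomial. Since `M ≥ 0` on `ℝ²` (AM-GM on `a²b⁴`, `a⁴b²`, `1`), every term is nonnegative.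
-/

open Matrix Unitary

theorem motzkin_nonneg (a b : ℝ) : 0 ≤ a ^ 2 * b ^ 4 + a ^ 4 * b ^ 2 - 3 * (a ^ 2 * b ^ 2) + 1 := by
  nlinarith [sq_nonneg (a ^ 2 * b - b), sq_nonneg (a * b ^ 2 - a), sq_nonneg (a ^ 2 * b ^ 2 - 1),
    sq_nonneg (a * b)]

namespace Matrix

variable {n : Type*} [Fintype n] [DecidableEq n]

theorem trace_mul_mul_self {R : Type*} [CommSemiring R] (X Y : Matrix n n R) :
    (X * Y * X).trace = (X ^ 2 * Y).trace := by
  rw [trace_mul_cycle, sq]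

theorem trace_diagonal_mul_mul_diagonal_mul_transpose (d e : n → ℝ) (W : Matrix n n ℝ) :
    (diagonal d * W * diagonal e * Wᵀ).trace = ∑ i, ∑ j, d i * e j * W i j ^ 2 := by
  simp only [trace, diag, mul_apply, diagonal_apply, transpose_apply, ite_mul, mul_ite, zero_mul,
    mul_zero, Finset.sum_ite_eq, Finset.sum_ite_eq', Finset.mem_univ, if_true]
  exact Finset.sum_congr rfl fun i _ => Finset.sum_congr rfl fun j _ => by ring

theorem IsHermitian.pow_eq_conjStarAlgAut_diagonal {A : Matrix n n ℝ} (hA : A.IsHermitian)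
    (m : ℕ) :
    A ^ m = conjStarAlgAut ℝ _ hA.eigenvectorUnitary (diagonal (hA.eigenvalues ^ m)) := by
  conv_lhs => rw [hA.spectral_theorem]
  rw [← map_pow, diagonal_pow]
  rfl

theorem IsHermitian.trace_pow_mul_pow {A B : Matrix n n ℝ} (hA : A.IsHermitian)
    (hB : B.IsHermitian) (m k : ℕ) :
    (A ^ m * B ^ k).trace = ∑ i, ∑ j, hA.eigenvalues i ^ m * hB.eigenvalues j ^ k *
      (star (hA.eigenvectorUnitary : Matrix n n ℝ) * hB.eigenvectorUnitary) i j ^ 2 := by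
  rw [hA.pow_eq_conjStarAlgAut_diagonal, hB.pow_eq_conjStarAlgAut_diagonal, conjStarAlgAut_apply,
    conjStarAlgAut_apply, ← trace_diagonal_mul_mul_diagonal_mul_transpose]
  set U : Matrix n n ℝ := ↑hA.eigenvectorUnitary
  set V : Matrix n n ℝ := ↑hB.eigenvectorUnitary
  have hW : (star U * V)ᵀ = star V * U := by
    rw [star_eq_conjTranspose, star_eq_conjTranspose, ← conjTranspose_eq_transpose_of_trivial,
      conjTranspose_mul, conjTranspose_conjTranspose]
  rw [hW, ← Matrix.mul_assoc _ (star V), trace_mul_comm _ U]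
  simp only [Matrix.mul_assoc, Pi.pow_def]

end Matrix

/-- The nc Motzkin polynomial `x y⁴ x + y x⁴ y - 3 x y² x + 1` is trace
positive on all pairs of real symmetric matrices of a common size. -/
theorem motzkin_trace_positive {r : ℕ} (A B : Matrix (Fin r) (Fin r) ℝ)
    (hA : A.IsSymm) (hB : B.IsSymm) :
    0 ≤ (A * B ^ 4 * A + B * A ^ 4 * B - (3 : ℝ) • (A * B ^ 2 * A) + 1).trace := by
  have hA' : A.IsHermitian := isHermitian_iff_isSymm.mpr hA
  have hB' : B.IsHermitian := isHermitian_iff_isSymm.mpr hB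
  have htrace : (A * B ^ 4 * A + B * A ^ 4 * B - (3 : ℝ) • (A * B ^ 2 * A) + 1).trace =
      (A ^ 2 * B ^ 4).trace + (A ^ 4 * B ^ 2).trace - 3 * (A ^ 2 * B ^ 2).trace
        + (A ^ 0 * B ^ 0).trace := by
    rw [trace_add, trace_sub, trace_add, trace_smul, smul_eq_mul, trace_mul_mul_self,
      trace_mul_mul_self, trace_mul_mul_self, trace_mul_comm (B ^ 2)]
    simp only [pow_zero, one_mul]
  rw [htrace]
  simp only [hA'.trace_pow_mul_pow hB', Finset.mul_sum, ← Finset.sum_add_distrib,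
    ← Finset.sum_sub_distrib]
  refine Finset.sum_nonneg fun i _ => Finset.sum_nonneg fun j _ => ?_
  convert mul_nonneg (motzkin_nonneg (hA'.eigenvalues i) (hB'.eigenvalues j))
    (sq_nonneg ((star (hA'.eigenvectorUnitary : Matrix (Fin r) (Fin r) ℝ) *
      hB'.eigenvectorUnitary) i j)) using 1
  ring
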